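/- arXiv:1702.03442 — 3 statements merged into one kernel-verified Lean document; each statement's English description precedes it below -/
import Mathlib

section
/- With $\kappa^*(T) = \frac{2IT + c^2 - \sqrt{4c^2 I T(1-T) + c^4}}{2(I+c^2)}$ for fixed $I \ge 1$ and $c > 0$, the function $T \mapsto \kappa^*(T)$ is strictly increasing on $(1/2, 1)$. -/
/-! The numerator of `κ*` is the strictly increasing linear term `2IT + c²` minus
`√(4c²I·T(1-T) + c⁴)`, and the latter is nonincreasing for `T ≥ 1/2` because `T(1-T)` is. -/

open Set

lemma mul_one_sub_antitoneOn : AntitoneOn (fun T : ℝ => T * (1 - T)) (Ici (1 / 2)) := by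
  intro a ha b _ hab
  simp only [mem_Ici] at ha
  nlinarith

lemma sqrt_mul_mul_one_sub_add_antitoneOn {k : ℝ} (hk : 0 ≤ k) (d : ℝ) :
    AntitoneOn (fun T : ℝ => √(k * T * (1 - T) + d)) (Ici (1 / 2)) := by
  intro a ha b hb hab
  have h := mul_le_mul_of_nonneg_left (mul_one_sub_antitoneOn ha hb hab) hk
  simp only [mul_assoc] at h ⊢
  exact Real.sqrt_le_sqrt (by linarith)

theorem sensitivity_value_strictMono_general (I c : ℝ) (hI : 1 ≤ I) :
    StrictMonoOn
      (fun T : ℝ =>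
        (2 * I * T + c ^ 2 - Real.sqrt (4 * c ^ 2 * I * T * (1 - T) + c ^ 4)) /
          (2 * (I + c ^ 2)))
      (Set.Ioo (1 / 2 : ℝ) 1) := by
  have hI0 : 0 < I := by linarith
  intro a ha b hb hab
  have hsqrt := sqrt_mul_mul_one_sub_add_antitoneOn (k := 4 * c ^ 2 * I) (by positivity) (c ^ 4)
    ha.1.le hb.1.le hab.le
  have hlin : 2 * I * a < 2 * I * b := by gcongr
  simp only at hsqrt ⊢
  gcongr ?_ / _
  linarith

/-- The transformed sensitivity value
`κ*(T) = (2IT + c² - √(4c²IT(1-T) + c⁴))/(2(I+c²))` is strictly increasing in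
`T` on `(1/2, 1)`, for fixed `I ≥ 1` and `c > 0`. -/
theorem sensitivity_value_strictMono (I c : ℝ) (hI : 1 ≤ I) (hc : 0 < c) :
    StrictMonoOn
      (fun T : ℝ =>
        (2 * I * T + c ^ 2 - Real.sqrt (4 * c ^ 2 * I * T * (1 - T) + c ^ 4)) /
          (2 * (I + c ^ 2)))
      (Set.Ioo (1 / 2 : ℝ) 1) :=
  sensitivity_value_strictMono_general I c hI
end

section
/- Let $I_n \to \infty$, fix $c > 0$, and suppose $T_n = \mu + V_n/\sqrt{I_n}$ where $\mu \in (0,1)$ and $V_n$ is a bounded sequence (or $V_n = O_p(1)$). Then $\kappa^*_n = \frac{2 I_n T_n + c^2 - \sqrt{4 c^2 I_n T_n(1-T_n) + c^4}}{2(I_n + c^2)}$ satisfies $\sqrt{I_n}\,(\kappa^*_n - \mu) = V_n - c\sqrt{\mu(1-\mu)} + o(1)$. -/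
open Filter Real

private lemma key_algebra (c μ L : ℝ) (s b V : ℝ) (hs : 0 < s) :
    s * ((2 * s ^ 2 * (μ + V / s) + c ^ 2 - 2 * c * s * b) / (2 * (s ^ 2 + c ^ 2)) - μ)
        - (V - c * L)
      = (c ^ 2 * (1 - 2 * μ) / (2 * s) - c * (b - L) - (V - c * L) * (c ^ 2 / s ^ 2)) /
        (1 + c ^ 2 / s ^ 2) := by
  have h1 : s ^ 2 + c ^ 2 ≠ 0 := by positivity
  have h2 : s ≠ 0 := hs.ne'
  field_simp
  ring

/-- Deterministic expansion underlying Theorem 1: if `I_n → ∞`, `c > 0`,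
`T_n = μ + V_n/√I_n` with `μ ∈ (0,1)` and `V_n` bounded, then the transformed
sensitivity value `κ*_n` satisfies `√I_n (κ*_n - μ) = V_n - c√(μ(1-μ)) + o(1)`. -/
theorem sensitivity_value_expansion (In : ℕ → ℝ)
    (hIn : Filter.Tendsto In Filter.atTop Filter.atTop)
    (c μ : ℝ) (hc : 0 < c) (hμ : μ ∈ Set.Ioo (0 : ℝ) 1)
    (V : ℕ → ℝ) (M : ℝ) (hV : ∀ n, |V n| ≤ M)
    (T : ℕ → ℝ) (hT : ∀ n, T n = μ + V n / Real.sqrt (In n))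
    (κ : ℕ → ℝ)
    (hκ : ∀ n, κ n =
      (2 * In n * T n + c ^ 2 -
          Real.sqrt (4 * c ^ 2 * In n * T n * (1 - T n) + c ^ 4)) /
        (2 * (In n + c ^ 2))) :
    Filter.Tendsto
      (fun n => Real.sqrt (In n) * (κ n - μ) - (V n - c * Real.sqrt (μ * (1 - μ))))
      Filter.atTop (nhds 0) := by
  set L := Real.sqrt (μ * (1 - μ)) with hLdef
  -- √(In n) → ∞
  have hsqrt_atTop : Tendsto Real.sqrt atTop atTop := by
    apply tendsto_atTop_atTop.2
    intro b
    refine ⟨(max 0 b) ^ 2, fun a ha => ?_⟩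
    calc b ≤ max 0 b := le_max_right _ _
      _ = Real.sqrt ((max 0 b) ^ 2) := (Real.sqrt_sq (le_max_left _ _)).symm
      _ ≤ Real.sqrt a := Real.sqrt_le_sqrt ha
  have hsI : Tendsto (fun n => Real.sqrt (In n)) atTop atTop := hsqrt_atTop.comp hIn
  have hsinv : Tendsto (fun n => (Real.sqrt (In n))⁻¹) atTop (nhds 0) :=
    tendsto_inv_atTop_zero.comp hsI
  have hIinv : Tendsto (fun n => (In n)⁻¹) atTop (nhds 0) :=
    tendsto_inv_atTop_zero.comp hIn
  -- V n / √(In n) → 0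
  have hVs : Tendsto (fun n => V n / Real.sqrt (In n)) atTop (nhds 0) := by
    refine squeeze_zero_norm (a := fun n => M * (Real.sqrt (In n))⁻¹) (fun n => ?_) ?_
    · by_cases hs : Real.sqrt (In n) = 0
      · simp [hs]
      · have hs' : 0 < Real.sqrt (In n) :=
          lt_of_le_of_ne (Real.sqrt_nonneg _) (Ne.symm hs)
        rw [Real.norm_eq_abs, abs_div, abs_of_nonneg hs'.le, div_eq_mul_inv]
        exact mul_le_mul_of_nonneg_right (hV n) (inv_nonneg.2 hs'.le)
    · simpa using tendsto_const_nhds.mul hsinv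
  -- T → μ
  have hTlim : Tendsto T atTop (nhds μ) := by
    have : T = fun n => μ + V n / Real.sqrt (In n) := funext hT
    rw [this]
    simpa using tendsto_const_nhds.add hVs
  -- c²/(4 In n) → 0
  have h4I : Tendsto (fun n => c ^ 2 / (4 * In n)) atTop (nhds 0) := by
    have h : (fun n => c ^ 2 / (4 * In n)) = fun n => (c ^ 2 / 4) * (In n)⁻¹ := by
      funext n
      rw [← div_div, div_eq_mul_inv]
    rw [h]
    simpa using tendsto_const_nhds.mul hIinv
  -- c²/In n → 0
  have hcI : Tendsto (fun n => c ^ 2 / In n) atTop (nhds 0) := by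
    have h : (fun n => c ^ 2 / In n) = fun n => c ^ 2 * (In n)⁻¹ := by
      funext n; rw [div_eq_mul_inv]
    rw [h]
    simpa using tendsto_const_nhds.mul hIinv
  -- the inner sqrt → L
  have hb : Tendsto (fun n => Real.sqrt (T n * (1 - T n) + c ^ 2 / (4 * In n)))
      atTop (nhds L) := by
    have hX : Tendsto (fun n => T n * (1 - T n) + c ^ 2 / (4 * In n))
        atTop (nhds (μ * (1 - μ))) := by
      simpa using (hTlim.mul (tendsto_const_nhds.sub hTlim)).add h4I
    exact (Real.continuous_sqrt.tendsto _).comp hX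
  -- the auxiliary function F
  set F : ℕ → ℝ := fun n =>
    (c ^ 2 * (1 - 2 * μ) / (2 * Real.sqrt (In n)) -
        c * (Real.sqrt (T n * (1 - T n) + c ^ 2 / (4 * In n)) - L) -
        (V n - c * L) * (c ^ 2 / In n)) /
      (1 + c ^ 2 / In n) with hFdef
  have hF : Tendsto F atTop (nhds 0) := by
    have hnum1 : Tendsto (fun n => c ^ 2 * (1 - 2 * μ) / (2 * Real.sqrt (In n)))
        atTop (nhds 0) := by
      have h : (fun n => c ^ 2 * (1 - 2 * μ) / (2 * Real.sqrt (In n)))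
          = fun n => (c ^ 2 * (1 - 2 * μ) / 2) * (Real.sqrt (In n))⁻¹ := by
        funext n; rw [← div_div, div_eq_mul_inv]
      rw [h]
      simpa using tendsto_const_nhds.mul hsinv
    have hnum2 : Tendsto
        (fun n => c * (Real.sqrt (T n * (1 - T n) + c ^ 2 / (4 * In n)) - L))
        atTop (nhds 0) := by
      have h := (tendsto_const_nhds (x := c)).mul (hb.sub (tendsto_const_nhds (x := L)))
      simpa using h
    have hnum3 : Tendsto (fun n => (V n - c * L) * (c ^ 2 / In n)) atTop (nhds 0) := by
      refine squeeze_zero_norm (a := fun n => (M + |c * L|) * |c ^ 2 / In n|)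
        (fun n => ?_) ?_
      · rw [norm_mul, Real.norm_eq_abs, Real.norm_eq_abs]
        have h1 : |V n - c * L| ≤ M + |c * L| :=
          (abs_sub _ _).trans (add_le_add (hV n) le_rfl)
        exact mul_le_mul_of_nonneg_right h1 (abs_nonneg _)
      · have : Tendsto (fun n => |c ^ 2 / In n|) atTop (nhds 0) := by
          simpa [Function.comp_def] using (continuous_abs.tendsto (0 : ℝ)).comp hcI
        simpa using tendsto_const_nhds.mul this
    have hnum : Tendsto
        (fun n => c ^ 2 * (1 - 2 * μ) / (2 * Real.sqrt (In n)) -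
          c * (Real.sqrt (T n * (1 - T n) + c ^ 2 / (4 * In n)) - L) -
          (V n - c * L) * (c ^ 2 / In n)) atTop (nhds 0) := by
      simpa using (hnum1.sub hnum2).sub hnum3
    have hden : Tendsto (fun n => 1 + c ^ 2 / In n) atTop (nhds 1) := by
      simpa using tendsto_const_nhds.add hcI
    simpa [hFdef, Pi.div_def] using hnum.div hden one_ne_zero
  -- eventual equality
  have heq : (fun n => Real.sqrt (In n) * (κ n - μ) - (V n - c * L)) =ᶠ[atTop] F := by
    filter_upwards [hIn.eventually_ge_atTop 1] with n hn
    have hIpos : 0 < In n := lt_of_lt_of_le one_pos hn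
    set s := Real.sqrt (In n) with hsdef
    have hspos : 0 < s := Real.sqrt_pos.2 hIpos
    have hss : In n = s ^ 2 := (Real.sq_sqrt hIpos.le).symm
    set b := Real.sqrt (T n * (1 - T n) + c ^ 2 / (4 * In n)) with hbdef
    have hroot : Real.sqrt (4 * c ^ 2 * In n * T n * (1 - T n) + c ^ 4)
        = 2 * c * s * b := by
      have h1 : 4 * c ^ 2 * In n * T n * (1 - T n) + c ^ 4
          = (2 * c * s) ^ 2 * (T n * (1 - T n) + c ^ 2 / (4 * In n)) := by
        field_simp [hIpos.ne']
        rw [hss]; ring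
      rw [h1, Real.sqrt_mul (sq_nonneg _), Real.sqrt_sq (by positivity)]
    rw [hκ n, hroot, hFdef]
    simp only
    rw [← hbdef, ← hsdef, hss, hT n, ← hsdef]
    exact key_algebra c μ L s b (V n) hspos
  exact hF.congr' heq.symm
end

section
/- Let $Y$ have density $f(y) = f_0(y - d)$ where $f_0$ is symmetric ($f_0(-y) = f_0(y)$), positive, and $d > 0$, and define $g(u) = \frac{f((F^+)^{-1}(u))}{f((F^+)^{-1}(u)) + f(-(F^+)^{-1}(u))}$ where $F^+(y) = P(|Y| \le y)$ for $y > 0$. If $f_0(y) = C e^{-\lambda y^2}$ (Gaussian tail with $\lambda > 0$), then $\lim_{u \to 1} g(u) = 1$. -/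
open Filter Real

/-- The exponents differ by `-λ(-y-d)² + λ(y-d)² = -4λdy`, so after cancelling `C` the ratio
is a logistic function of `y`. -/
theorem gaussian_shift_ratio_eq {C : ℝ} (hC : C ≠ 0) (lam d y : ℝ) :
    C * exp (-lam * (y - d) ^ 2) / (C * exp (-lam * (y - d) ^ 2) + C * exp (-lam * (-y - d) ^ 2))
      = (1 + exp (-(4 * lam * d) * y))⁻¹ := by
  have hexp : exp (-lam * (-y - d) ^ 2) = exp (-lam * (y - d) ^ 2) * exp (-(4 * lam * d) * y) := by
    rw [← exp_add]; ring_nf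
  rw [hexp]
  field_simp

theorem tendsto_inv_one_add_exp_neg_mul_atTop {c : ℝ} (hc : 0 < c) :
    Tendsto (fun y => (1 + exp (-c * y))⁻¹) atTop (nhds 1) := by
  have hexp : Tendsto (fun y => exp (-c * y)) atTop (nhds 0) :=
    tendsto_exp_atBot.comp (tendsto_id.const_mul_atTop_of_neg (neg_lt_zero.mpr hc))
  simpa using (tendsto_const_nhds.add hexp).inv₀ (by norm_num : (1 : ℝ) + 0 ≠ 0)

/-- For a Gaussian-tailed shifted density `f(y) = f₀(y-d)`, `f₀(y) = C e^{-λy²}`,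
`λ > 0`, `d > 0`, the function `g(u) = f(y)/(f(y) + f(-y))` at `y = (F⁺)⁻¹(u)`
tends to `1` as `u → 1`, since `(F⁺)⁻¹(u) → ∞`. -/
theorem g_limit_gaussian_tail (C lam d : ℝ) (hC : 0 < C) (hlam : 0 < lam) (hd : 0 < d)
    (f₀ : ℝ → ℝ) (hf₀ : ∀ y, f₀ y = C * Real.exp (-lam * y ^ 2))
    (G : ℝ → ℝ) (hG : Tendsto G (nhdsWithin 1 (Set.Iio 1)) atTop) :
    Tendsto (fun u => f₀ (G u - d) / (f₀ (G u - d) + f₀ (-(G u) - d)))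
      (nhdsWithin 1 (Set.Iio 1)) (nhds 1) := by
  have hlogistic := tendsto_inv_one_add_exp_neg_mul_atTop (c := 4 * lam * d) (by positivity)
  refine (hlogistic.comp hG).congr fun u => ?_
  simp only [Function.comp, hf₀, gaussian_shift_ratio_eq hC.ne']
end
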